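/- Let A be a finite set of positive integers with gcd 1. If A is UM (some A-core κ_A contains all other A-cores as subpartitions), then the A-core whose beta set equals the full set P(A) of gaps of S(A) is this unique maximal A-core κ_A. -/

import Mathlib

/-- A partition: a nonincreasing list of positive integers. -/
structure IntPartition where
  parts : List ℕ
  sorted : parts.Pairwise (· ≥ ·)
  pos : ∀ x ∈ parts, 0 < x

namespace IntPartition

/-- The i-th part (0-indexed), or 0 past the end. -/
def part (lam : IntPartition) (i : ℕ) : ℕ := lam.parts.getD i 0

/-- Hook length of the cell in (0-indexed) row i and (1-indexed) column j:
    λ_i - j + #{rows k > i with λ_k ≥ j} + 1. -/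
def hook (lam : IntPartition) (i j : ℕ) : ℕ :=
  lam.part i - j + ((List.range lam.parts.length).countP
    fun k => decide (i < k ∧ j ≤ lam.part k)) + 1

/-- λ is an A-core: no hook length lies in A. -/
def IsCore (A : Finset ℕ) (lam : IntPartition) : Prop :=
  ∀ i j : ℕ, i < lam.parts.length → 1 ≤ j → j ≤ lam.part i → lam.hook i j ∉ A

/-- The beta set of λ: first-column hook lengths {λ_i + r - i} (1-indexed form). -/
def beta (lam : IntPartition) : Finset ℕ :=
  (Finset.range lam.parts.length).image fun i => lam.part i + (lam.parts.length - 1 - i)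

/-- μ is a subpartition of λ. -/
def Sub (mu lam : IntPartition) : Prop :=
  mu.parts.length ≤ lam.parts.length ∧ ∀ i : ℕ, mu.part i ≤ lam.part i

end IntPartition

/-- Membership in the numerical semigroup generated by the finite set A. -/
def SemiS (A : Finset ℕ) (n : ℕ) : Prop := ∃ f : ℕ → ℕ, n = ∑ a ∈ A, f a * a

/-- n is a gap of S(A). -/
def GapS (A : Finset ℕ) (n : ℕ) : Prop := 0 < n ∧ ¬ SemiS A n

/-- A is UM: some A-core contains every A-core as a subpartition. -/
def UM (A : Finset ℕ) : Prop :=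
  ∃ κ : IntPartition, IntPartition.IsCore A κ ∧ ∀ μ : IntPartition, IntPartition.IsCore A μ → μ.Sub κ

/-!
The hook lengths in row `i` of a partition and the differences `β_i - β_k` (`k > i`) are
disjoint and together have `β_i` elements, so they fill up `{1, …, β_i}`. For an `A`-core no
hook length lies in `A`, hence its beta set is closed under subtracting elements of `A`, and by
induction it consists of gaps of `S(A)`. Thus `β(κ) ⊆ P(A) = β(λ)`; since `λ ⊆ κ`, `λ` has at
most as many parts as `κ`, so the two beta sets have the same size and coincide, and a
partition is determined by its beta set.
-/

lemma SemiS.exists_sub {A : Finset ℕ} {n : ℕ} (h : SemiS A n) (hn : 0 < n) :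
    ∃ a ∈ A, 0 < a ∧ a ≤ n ∧ SemiS A (n - a) := by
  obtain ⟨f, rfl⟩ := h
  obtain ⟨a, ha, hfa⟩ := Finset.exists_ne_zero_of_sum_ne_zero hn.ne'
  obtain ⟨hfa0, ha0⟩ := mul_ne_zero_iff.1 hfa
  have hle : a ≤ f a * a := Nat.le_mul_of_pos_left a (Nat.pos_of_ne_zero hfa0)
  have herase : ∑ x ∈ A.erase a, Function.update f a (f a - 1) x * x =
      ∑ x ∈ A.erase a, f x * x :=
    Finset.sum_congr rfl fun x hx => by rw [Function.update_of_ne (Finset.ne_of_mem_erase hx)]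
  refine ⟨a, ha, Nat.pos_of_ne_zero ha0, ?_, Function.update f a (f a - 1), ?_⟩
  · exact hle.trans (Finset.single_le_sum (f := fun x => f x * x) (fun _ _ => Nat.zero_le _) ha)
  · rw [← Finset.add_sum_erase A (fun x => f x * x) ha,
      ← Finset.add_sum_erase A (fun x => Function.update f a (f a - 1) x * x) ha,
      Function.update_self, herase, Nat.sub_one_mul]
    omega

namespace IntPartition

open Finset

variable (lam : IntPartition)

lemma part_pos {i : ℕ} (hi : i < lam.parts.length) : 0 < lam.part i := by
  rw [part, List.getD_eq_getElem _ _ hi]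
  exact lam.pos _ (List.getElem_mem hi)

lemma antitone_part : Antitone lam.part := by
  intro i k hik
  rcases lt_or_ge k lam.parts.length with hk | hk
  · rcases hik.eq_or_lt with rfl | hik
    · rfl
    rw [part, part, List.getD_eq_getElem _ _ hk, List.getD_eq_getElem _ _ (hik.trans hk)]
    exact List.pairwise_iff_getElem.1 lam.sorted i k (hik.trans hk) hk hik
  · rw [part, List.getD_eq_default _ _ hk]
    exact Nat.zero_le _

def betaNum (i : ℕ) : ℕ := lam.part i + (lam.parts.length - 1 - i)

lemma mem_beta {n : ℕ} : n ∈ lam.beta ↔ ∃ i < lam.parts.length, lam.betaNum i = n := by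
  simp [beta, betaNum]

lemma betaNum_mem_beta {i : ℕ} (hi : i < lam.parts.length) : lam.betaNum i ∈ lam.beta :=
  lam.mem_beta.2 ⟨i, hi, rfl⟩

lemma one_le_betaNum {i : ℕ} (hi : i < lam.parts.length) : 1 ≤ lam.betaNum i := by
  have := lam.part_pos hi
  unfold betaNum
  omega

lemma betaNum_strictAntiOn : StrictAntiOn lam.betaNum (Set.Iio lam.parts.length) := by
  intro i _ k hk hik
  have := lam.antitone_part hik.le
  simp only [Set.mem_Iio] at hk
  unfold betaNum
  omega

lemma card_beta : #lam.beta = lam.parts.length := by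
  rw [beta, card_image_of_injOn, card_range]
  rw [coe_range]
  exact lam.betaNum_strictAntiOn.injOn

def leg (i j : ℕ) : ℕ := #{k ∈ range lam.parts.length | i < k ∧ j ≤ lam.part k}

lemma hook_eq (i j : ℕ) : lam.hook i j = lam.part i - j + lam.leg i j + 1 := by
  simp [hook, leg, List.countP_eq_length_filter, Finset.filter, Finset.range, Finset.card,
    Multiset.range, Multiset.filter_coe]

lemma leg_one (i : ℕ) : lam.leg i 1 = lam.parts.length - 1 - i := by
  have h : ({k ∈ range lam.parts.length | i < k ∧ 1 ≤ lam.part k} : Finset ℕ) =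
      Ioo i lam.parts.length := by
    ext k
    simp only [mem_filter, mem_range, mem_Ioo]
    exact ⟨fun h => ⟨h.2.1, h.1⟩, fun h => ⟨h.2, h.1, lam.part_pos h.2⟩⟩
  rw [leg, h, Nat.card_Ioo]
  omega

lemma leg_antitone (i : ℕ) : Antitone (lam.leg i) := fun _ _ hjj =>
  card_le_card (monotone_filter_right _ fun _ _ hk => ⟨hk.1, hjj.trans hk.2⟩)

lemma le_leg {i j k : ℕ} (hk : k < lam.parts.length) (hj : j ≤ lam.part k) :
    k - i ≤ lam.leg i j := by
  have hsub : Ioc i k ⊆ {k' ∈ range lam.parts.length | i < k' ∧ j ≤ lam.part k'} := by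
    intro k' hk'
    rw [mem_Ioc] at hk'
    rw [mem_filter, mem_range]
    exact ⟨by omega, hk'.1, hj.trans (lam.antitone_part hk'.2)⟩
  simpa [leg] using card_le_card hsub

lemma leg_lt {i j k : ℕ} (hik : i < k) (hj : lam.part k < j) : lam.leg i j < k - i := by
  have hsub : {k' ∈ range lam.parts.length | i < k' ∧ j ≤ lam.part k'} ⊆ Ioo i k := by
    intro k' hk'
    rw [mem_filter] at hk'
    rw [mem_Ioo]
    refine ⟨hk'.2.1, lt_of_not_ge fun hkk' => ?_⟩
    have := lam.antitone_part hkk'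
    omega
  have := card_le_card hsub
  rw [Nat.card_Ioo] at this
  unfold leg
  omega

lemma hook_strictAntiOn (i : ℕ) : StrictAntiOn (lam.hook i) (Set.Icc 1 (lam.part i)) := by
  intro j _ j' hj' hjj
  have := lam.leg_antitone i hjj.le
  simp only [Set.mem_Icc] at hj'
  rw [hook_eq, hook_eq]
  omega

lemma hook_le_betaNum {i j : ℕ} (hj : 1 ≤ j) (hji : j ≤ lam.part i) :
    lam.hook i j ≤ lam.betaNum i := by
  have := lam.leg_antitone i hj
  rw [hook_eq, betaNum, ← leg_one]
  omega

lemma hook_ne_betaNum_sub {i j k : ℕ} (hik : i < k) (hk : k < lam.parts.length)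
    (hji : j ≤ lam.part i) :
    lam.hook i j ≠ lam.betaNum i - lam.betaNum k := by
  have hpart := lam.antitone_part hik.le
  rw [hook_eq, betaNum, betaNum]
  rcases le_or_gt j (lam.part k) with hjk | hjk
  · have := lam.le_leg (i := i) hk hjk
    omega
  · have := lam.leg_lt hik hjk
    omega

lemma image_sub_betaNum_union_image_hook {i : ℕ} (hi : i < lam.parts.length) :
    (Ioo i lam.parts.length).image (lam.betaNum i - lam.betaNum ·) ∪
      (Icc 1 (lam.part i)).image (lam.hook i) = Icc 1 (lam.betaNum i) := by
  set S := (Ioo i lam.parts.length).image (lam.betaNum i - lam.betaNum ·)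
  set H := (Icc 1 (lam.part i)).image (lam.hook i)
  have hlt : ∀ k ∈ Ioo i lam.parts.length, lam.betaNum k < lam.betaNum i := fun k hk =>
    lam.betaNum_strictAntiOn hi (mem_Ioo.1 hk).2 (mem_Ioo.1 hk).1
  have hsub : S ∪ H ⊆ Icc 1 (lam.betaNum i) := by
    refine union_subset (fun x hx => ?_) (fun x hx => ?_) <;> rw [mem_image] at hx
    · obtain ⟨k, hk, rfl⟩ := hx
      have := hlt k hk
      rw [mem_Icc]
      omega
    · obtain ⟨j, hj, rfl⟩ := hx
      rw [mem_Icc] at hj ⊢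
      exact ⟨by rw [hook_eq]; omega, lam.hook_le_betaNum hj.1 hj.2⟩
  have hdisj : Disjoint S H := by
    simp only [S, H, disjoint_left, mem_image, not_exists, not_and, mem_Ioo, mem_Icc]
    rintro _ ⟨k, hk, rfl⟩ j hj
    exact lam.hook_ne_betaNum_sub hk.1 hk.2 hj.2
  have hcardS : #S = lam.parts.length - 1 - i := by
    rw [card_image_of_injOn, Nat.card_Ioo]
    · omega
    intro k hk k' hk' h
    have := hlt k hk
    have := hlt k' hk'
    exact lam.betaNum_strictAntiOn.injOn (mem_Ioo.1 hk).2 (mem_Ioo.1 hk').2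
      (by simp only at h; omega)
  have hcardH : #H = lam.part i := by
    rw [card_image_of_injOn (by simpa using (lam.hook_strictAntiOn i).injOn), Nat.card_Icc]
    omega
  refine eq_of_subset_of_card_le hsub ?_
  rw [card_union_of_disjoint hdisj, hcardS, hcardH, Nat.card_Icc, betaNum]
  omega

lemma IsCore.sub_mem_beta {A : Finset ℕ} {lam : IntPartition} (hc : lam.IsCore A) {n a : ℕ}
    (hn : n ∈ lam.beta) (ha : a ∈ A) (han : a ≤ n) : n - a ∈ lam.beta := by
  rcases Nat.eq_zero_or_pos a with rfl | ha0
  · simpa using hn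
  obtain ⟨i, hi, rfl⟩ := lam.mem_beta.1 hn
  have hmem : a ∈ Icc 1 (lam.betaNum i) := mem_Icc.2 ⟨ha0, han⟩
  rw [← lam.image_sub_betaNum_union_image_hook hi, mem_union, mem_image, mem_image] at hmem
  rcases hmem with ⟨k, hk, rfl⟩ | ⟨j, hj, rfl⟩
  · have := lam.betaNum_strictAntiOn hi (mem_Ioo.1 hk).2 (mem_Ioo.1 hk).1
    rw [Nat.sub_sub_self this.le]
    exact lam.betaNum_mem_beta (mem_Ioo.1 hk).2
  · rw [mem_Icc] at hj
    exact absurd ha (hc i j hi hj.1 hj.2)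

lemma card_filter_betaNum_lt {i : ℕ} (hi : i < lam.parts.length) :
    #{b ∈ lam.beta | lam.betaNum i < b} = i := by
  have h : ({b ∈ lam.beta | lam.betaNum i < b} : Finset ℕ) = (range i).image lam.betaNum := by
    ext b
    simp only [mem_filter, mem_image, mem_range, mem_beta]
    constructor
    · rintro ⟨⟨k, hk, rfl⟩, hlt⟩
      exact ⟨k, (lam.betaNum_strictAntiOn.lt_iff_gt hi hk).1 hlt, rfl⟩
    · rintro ⟨k, hk, rfl⟩
      exact ⟨⟨k, hk.trans hi, rfl⟩, lam.betaNum_strictAntiOn (hk.trans hi) hi hk⟩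
  rw [h, card_image_of_injOn, card_range]
  exact lam.betaNum_strictAntiOn.injOn.mono fun k hk => (mem_range.1 (mem_coe.1 hk)).trans hi

lemma parts_eq_of_beta_eq {lam mu : IntPartition} (h : lam.beta = mu.beta) :
    lam.parts = mu.parts := by
  have hlen : lam.parts.length = mu.parts.length := by rw [← card_beta, ← card_beta, h]
  have hbeta : ∀ i < lam.parts.length, lam.betaNum i = mu.betaNum i := by
    intro i hi
    obtain ⟨j, hj, hij⟩ := mu.mem_beta.1 (h ▸ lam.betaNum_mem_beta hi)
    have : i = j := by
      rw [← lam.card_filter_betaNum_lt hi, ← mu.card_filter_betaNum_lt hj, h, hij]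
    subst this
    exact hij.symm
  refine List.ext_getElem hlen fun i hi hi' => ?_
  have := hbeta i hi
  rw [betaNum, betaNum, part, part, List.getD_eq_getElem _ _ hi,
    List.getD_eq_getElem _ _ hi'] at this
  omega

lemma IsCore.gapS_of_mem_beta {A : Finset ℕ} {lam : IntPartition}
    (hc : lam.IsCore A) {n : ℕ} (hn : n ∈ lam.beta) : GapS A n := by
  induction n using Nat.strong_induction_on with
  | _ n ih =>
    obtain ⟨i, hi, rfl⟩ := lam.mem_beta.1 hn
    have hpos := lam.one_le_betaNum hi
    refine ⟨hpos, fun hS => ?_⟩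
    obtain ⟨a, ha, ha0, han, hSa⟩ := hS.exists_sub hpos
    exact (ih _ (by omega) (hc.sub_mem_beta hn ha han)).2 hSa

end IntPartition

theorem maximal_core_has_full_gap_beta_set_general (A : Finset ℕ)
    (κ : IntPartition) (hκ : IntPartition.IsCore A κ)
    (hmax : ∀ μ : IntPartition, IntPartition.IsCore A μ → μ.Sub κ)
    (lam : IntPartition) (hlam : IntPartition.IsCore A lam)
    (hbeta : ∀ n : ℕ, n ∈ lam.beta ↔ GapS A n) :
    lam.parts = κ.parts := by
  have hsub : κ.beta ⊆ lam.beta := fun n hn => (hbeta n).2 (hκ.gapS_of_mem_beta hn)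
  have hcard : lam.beta.card ≤ κ.beta.card := by
    rw [IntPartition.card_beta, IntPartition.card_beta]
    exact (hmax lam hlam).1
  exact (IntPartition.parts_eq_of_beta_eq (Finset.eq_of_subset_of_card_le hsub hcard)).symm

theorem maximal_core_has_full_gap_beta_set (A : Finset ℕ) (hA : ∀ a ∈ A, 0 < a)
    (hgcd : A.gcd id = 1)
    (κ : IntPartition) (hκ : IntPartition.IsCore A κ)
    (hmax : ∀ μ : IntPartition, IntPartition.IsCore A μ → μ.Sub κ)
    (lam : IntPartition) (hlam : IntPartition.IsCore A lam)
    (hbeta : ∀ n : ℕ, n ∈ lam.beta ↔ GapS A n) :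
    lam.parts = κ.parts :=
  maximal_core_has_full_gap_beta_set_general A κ hκ hmax lam hlam hbeta
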